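/- For every integer b ≥ 2, one has |[2, 2, b, 2*(b−1)]| = 3b² − 5b + 3, and, setting q = |[2, 2, b, 2*b]|, one has in the rational numbers: 1 − (|[2, 2]| + |[2*b]|)/q − (1 + |[2, 2, b, 2*(b−1)]|)/q = 2(b−5)/q; in particular this quantity (which equals E·f*(K_{S(b)}) for the relevant (−1)-curve E in Theorem 1.5) is negative for b < 5, zero for b = 5, and positive for b > 5. -/

import Mathlib

/-- Hirzebruch–Jung numerator: |[]| = 1, |[n]| = n,
|[n₁, n₂, …]| = n₁·|[n₂, …]| − |[n₃, …]|. -/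
def hj : List ℤ → ℤ
  | [] => 1
  | [n] => n
  | n :: m :: l => n * hj (m :: l) - hj l

/-! All three numerators are evaluated in closed form by unrolling the recursion along the
chain of 2's: `|[2*n]| = n + 1`, hence `|[a, 2*n]| = a(n + 1) - n` and
`|[2, 2, a, 2*n]| = 3a(n + 1) - 5n - 2`. This gives `q = 3b² - 2b - 2 > 0`, and the numerator
of the rational expression collapses to `q - (3 + b) - (1 + 3b² - 5b + 3) = 2(b - 5)`. -/

lemma hj_replicate_two (n : ℕ) : hj (List.replicate n 2) = n + 1 := by
  induction n using Nat.twoStepInduction with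
  | zero => simp [hj]
  | one => simp [hj]
  | more n ih₁ ih₂ =>
    rw [List.replicate_succ, List.replicate_succ, hj, ← List.replicate_succ, ih₁, ih₂]
    push_cast
    ring

lemma hj_cons_replicate_two (a : ℤ) (n : ℕ) :
    hj (a :: List.replicate n 2) = a * (n + 1) - n := by
  cases n with
  | zero => simp [hj]
  | succ n =>
    rw [List.replicate_succ, hj, ← List.replicate_succ, hj_replicate_two, hj_replicate_two]
    push_cast
    ring

lemma hj_two_two_cons_replicate_two (a : ℤ) (n : ℕ) :
    hj (2 :: 2 :: a :: List.replicate n 2) = 3 * a * (n + 1) - 5 * n - 2 := by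
  rw [hj, hj, hj_cons_replicate_two, hj_replicate_two]
  ring

lemma hj_two_two_cons_replicate_two_toNat (a k : ℤ) (hk : 0 ≤ k) :
    hj ([2, 2, a] ++ List.replicate k.toNat 2) = 3 * a * (k + 1) - 5 * k - 2 := by
  rw [List.cons_append, List.cons_append, List.cons_append, List.nil_append,
    hj_two_two_cons_replicate_two, Int.toNat_of_nonneg hk]

theorem Ef_K_Sb_three_sing (b : ℤ) (hb : 2 ≤ b)
    (q : ℤ) (hq : q = hj ([2, 2, b] ++ List.replicate b.toNat 2)) :
    hj ([2, 2, b] ++ List.replicate (b - 1).toNat 2) = 3 * b ^ 2 - 5 * b + 3 ∧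
    (1 : ℚ) -
        ((hj [2, 2] : ℚ) + (hj (List.replicate b.toNat 2) : ℚ)) / (q : ℚ) -
        (1 + (hj ([2, 2, b] ++ List.replicate (b - 1).toNat 2) : ℚ)) / (q : ℚ) =
      (2 * ((b : ℚ) - 5)) / (q : ℚ) ∧
    (b < 5 → (2 * ((b : ℚ) - 5)) / (q : ℚ) < 0) ∧
    (b = 5 → (2 * ((b : ℚ) - 5)) / (q : ℚ) = 0) ∧
    (5 < b → 0 < (2 * ((b : ℚ) - 5)) / (q : ℚ)) := by
  have hp : hj ([2, 2, b] ++ List.replicate (b - 1).toNat 2) = 3 * b ^ 2 - 5 * b + 3 := by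
    rw [hj_two_two_cons_replicate_two_toNat b (b - 1) (by omega)]
    ring
  have hq_eq : q = 3 * b ^ 2 - 2 * b - 2 := by
    rw [hq, hj_two_two_cons_replicate_two_toNat b b (by omega)]
    ring
  have hq_pos : (0 : ℚ) < q := by
    have : 0 < q := by rw [hq_eq]; nlinarith
    exact_mod_cast this
  have hb_cast : ((b.toNat : ℕ) : ℚ) = b := by exact_mod_cast Int.toNat_of_nonneg (by omega)
  refine ⟨hp, ?_, fun h => div_neg_of_neg_of_pos ?_ hq_pos, fun h => by simp [h],
    fun h => div_pos ?_ hq_pos⟩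
  · rw [hp, show hj [2, 2] = 3 from rfl, hj_replicate_two, hq_eq]
    rw [hq_eq] at hq_pos
    field_simp
    push_cast
    rw [hb_cast]
    ring
  · have : (b : ℚ) < 5 := by exact_mod_cast h
    linarith
  · have : (5 : ℚ) < b := by exact_mod_cast h
    linarith
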